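/- Let t be a good ω-word over S = {1,2,3} of the form t = 1213·b₁·b₂·b₃·⋯ where each bᵢ ∈ {12, 123, 1232, 13, 1323}. Then neither 132313 nor 21232 is a factor of t. -/

import Mathlib

/-!
Alphabet encodings:
* `S = {1,2,3}` is `Fin 3` with `1 ↦ 0`, `2 ↦ 1`, `3 ↦ 2` (so `1 < 2 < 3` matches `0 < 1 < 2`).
* `T = {a,b,c,d}` is `Fin 4` with `a ↦ 0`, `b ↦ 1`, `c ↦ 2`, `d ↦ 3`.
* `U = {a,c,d}` is `Fin 3` with `a ↦ 0`, `c ↦ 1`, `d ↦ 2` (so `a < c < d` matches `0 < 1 < 2`).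
-/

/-- The six forbidden factors `1231321, 1321231, 2132312, 2312132, 3123213, 3213123`
(images of the letter pattern `xyzxzyx`). -/
def Forbidden : List (List (Fin 3)) :=
  [[0,1,2,0,2,1,0], [0,2,1,0,1,2,0], [1,0,2,1,2,0,1],
   [1,2,0,1,0,2,1], [2,0,1,2,1,0,2], [2,1,0,2,0,1,2]]

/-- A finite word is square-free if it has no nonempty factor `x ++ x`. -/
def SquareFreeL {α : Type*} (w : List α) : Prop :=
  ∀ x : List α, x ≠ [] → ¬ (x ++ x) <:+: w

/-- A finite word over `S` is factor-good if no forbidden factor occurs in it. -/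
def FactorGoodL (w : List (Fin 3)) : Prop :=
  ∀ p ∈ Forbidden, ¬ p <:+: w

/-- A finite word over `S` is good if it is square-free and factor-good. -/
def GoodL (w : List (Fin 3)) : Prop := SquareFreeL w ∧ FactorGoodL w

/-- The factor of an ω-word `w` starting at position `i`, of length `n`. -/
def factorAtN {α : Type*} (w : ℕ → α) (i n : ℕ) : List α :=
  (List.range n).map fun k => w (i + k)

/-- `l` is a (finite) factor of the ω-word `w`. -/
def IsFactorN {α : Type*} (l : List α) (w : ℕ → α) : Prop :=
  ∃ i : ℕ, l = factorAtN w i l.length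

/-- An ω-word is square-free if no nonempty `x ++ x` is a factor of it. -/
def SquareFreeN {α : Type*} (w : ℕ → α) : Prop :=
  ∀ x : List α, x ≠ [] → ¬ IsFactorN (x ++ x) w

/-- An ω-word over `S` is factor-good if no forbidden factor occurs in it. -/
def FactorGoodN (w : ℕ → Fin 3) : Prop :=
  ∀ p ∈ Forbidden, ¬ IsFactorN p w

/-- An ω-word over `S` is good if it is square-free and factor-good. -/
def GoodN (w : ℕ → Fin 3) : Prop := SquareFreeN w ∧ FactorGoodN w

/-- The factor of a ℤ-word `w` starting at position `i`, of length `n`. -/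
def factorAtZ {α : Type*} (w : ℤ → α) (i : ℤ) (n : ℕ) : List α :=
  (List.range n).map fun k => w (i + k)

/-- `l` is a (finite) factor of the ℤ-word `w`. -/
def IsFactorZ {α : Type*} (l : List α) (w : ℤ → α) : Prop :=
  ∃ i : ℤ, l = factorAtZ w i l.length

/-- A ℤ-word is square-free if no nonempty `x ++ x` is a factor of it. -/
def SquareFreeZ {α : Type*} (w : ℤ → α) : Prop :=
  ∀ x : List α, x ≠ [] → ¬ IsFactorZ (x ++ x) w

/-- A ℤ-word over `S` is factor-good if no forbidden factor occurs in it. -/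
def FactorGoodZ (w : ℤ → Fin 3) : Prop :=
  ∀ p ∈ Forbidden, ¬ IsFactorZ p w

/-- A ℤ-word over `S` is good if it is square-free and factor-good. -/
def GoodZ (w : ℤ → Fin 3) : Prop := SquareFreeZ w ∧ FactorGoodZ w

/-- The ω-word `w` is the infinite concatenation `blocks 0 · blocks 1 · blocks 2 ⋯`. -/
def NConcat {α : Type*} (w : ℕ → α) (blocks : ℕ → List α) : Prop :=
  ∃ p : ℕ → ℕ, p 0 = 0 ∧ (∀ i, p (i + 1) = p i + (blocks i).length) ∧
    ∀ i, blocks i = factorAtN w (p i) (blocks i).length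

/-- The ℤ-word `w` is the bi-infinite concatenation `⋯ blocks (-1) · blocks 0 · blocks 1 ⋯`
(up to a shift of indexing). -/
def ZConcat {α : Type*} (w : ℤ → α) (blocks : ℤ → List α) : Prop :=
  ∃ p : ℤ → ℤ, (∀ i, p (i + 1) = p i + (blocks i).length) ∧
    ∀ i, blocks i = factorAtZ w (p i) (blocks i).length

/-- The morphism `f : T* → S*` on letters:
`f(a) = 1213`, `f(b) = 123`, `f(c) = 1323`, `f(d) = 1232`. -/
def fL : Fin 4 → List (Fin 3) := ![[0,1,0,2], [0,1,2], [0,2,1,2], [0,1,2,1]]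

/-- The morphism `f : T* → S*` on finite words. -/
def fW (v : List (Fin 4)) : List (Fin 3) := (v.map fL).flatten

/-- The inclusion `U → T`: `a ↦ a`, `c ↦ c`, `d ↦ d`. -/
def uT : Fin 3 → Fin 4 := ![0, 2, 3]

/-- Does `g` insert the letter `b` between `x` and `y`?  True exactly for the
pairs `ac`, `da`, `dc`. -/
def needB (x y : Fin 3) : Bool :=
  (x == 0 && y == 1) || (x == 2 && y == 0) || (x == 2 && y == 1)

/-- The map `g : U* → T*`, replacing each factor `ac` by `abc`, `da` by `dba`
and `dc` by `dbc`. -/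
def gW : List (Fin 3) → List (Fin 4)
  | [] => []
  | [x] => [uT x]
  | x :: y :: r => (uT x :: (if needB x y then [(1 : Fin 4)] else [])) ++ gW (y :: r)

/-- The block of `f(g(u))` contributed by position `i` of the ω-word `u` over `U`:
the `f`-image of `u i`, followed by `f(b) = 123` when `g` inserts a `b` after `u i`. -/
def fgBlockN (u : ℕ → Fin 3) (i : ℕ) : List (Fin 3) :=
  fL (uT (u i)) ++ (if needB (u i) (u (i + 1)) then fL 1 else [])

/-- The block of `f(g(u))` contributed by position `i` of the ℤ-word `u` over `U`. -/
def fgBlockZ (u : ℤ → Fin 3) (i : ℤ) : List (Fin 3) :=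
  fL (uT (u i)) ++ (if needB (u i) (u (i + 1)) then fL 1 else [])

/-- The letter permutation `π` of `S`: fixes `1`, interchanges `2` and `3`. -/
def pi3 : Fin 3 → Fin 3 := ![0, 2, 1]

/-- Lexicographic order on ω-words: `v ≤ w` iff `v = w` or at the first index
where they differ the letter of `v` is smaller. -/
def LexLeN {α : Type*} [LinearOrder α] (v w : ℕ → α) : Prop :=
  v = w ∨ ∃ n : ℕ, (∀ k < n, v k = w k) ∧ v n < w n

/-!
Every block begins with `1`, and apart from the `1` in the middle of `1213` no block contains
another `1`; so the letters `1` of `t` mark the block boundaries and the few letters following a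
`1` determine its block. Reading `132313` this way forces the blocks `1323·13` or `1323·1323`,
which contain the squares `3131` and `(1323)²`; reading `21232` forces `12·1232` or `1232·1232`,
which contain `1212` and `(1232)²`.
-/

section Occurrence

variable {α : Type*} {u v : List α} {w : ℕ → α} {n k : ℕ}

theorem length_factorAtN (w : ℕ → α) (i n : ℕ) : (factorAtN w i n).length = n := by
  simp [factorAtN]

theorem factorAtN_add (w : ℕ → α) (i m n : ℕ) :
    factorAtN w i (m + n) = factorAtN w i m ++ factorAtN w (i + m) n := by
  simp [factorAtN, List.range_add, Nat.add_assoc]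

def OccursAt (u : List α) (w : ℕ → α) (n : ℕ) : Prop :=
  factorAtN w n u.length = u

theorem isFactorN_iff_exists_occursAt : IsFactorN u w ↔ ∃ n, OccursAt u w n :=
  exists_congr fun _ => eq_comm

theorem occursAt_singleton {a : α} : OccursAt [a] w n ↔ w n = a := by
  simp [OccursAt, factorAtN]

theorem occursAt_append_iff :
    OccursAt (u ++ v) w n ↔ OccursAt u w n ∧ OccursAt v w (n + u.length) := by
  unfold OccursAt
  rw [List.length_append, factorAtN_add]
  refine ⟨fun h => List.append_inj h (length_factorAtN ..), ?_⟩
  rintro ⟨hu, hv⟩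
  rw [hu, hv]

theorem OccursAt.of_prefix (h : OccursAt v w n) (huv : u <+: v) : OccursAt u w n := by
  obtain ⟨r, rfl⟩ := huv
  exact (occursAt_append_iff.1 h).1

theorem OccursAt.drop (h : OccursAt u w n) (k : ℕ) : OccursAt (u.drop k) w (n + k) := by
  rcases le_total k u.length with hk | hk
  · rw [← List.take_append_drop k u, occursAt_append_iff, List.length_take_of_le hk] at h
    exact h.2
  · rw [List.drop_eq_nil_of_le hk]
    rfl

theorem OccursAt.getElem? (h : OccursAt u w n) (hk : k < u.length) : u[k]? = some (w (n + k)) := by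
  rw [← h]
  simp [factorAtN, hk]

theorem OccursAt.prefix_or_prefix (hu : OccursAt u w n) (hv : OccursAt v w n) :
    u <+: v ∨ v <+: u := by
  wlog huv : u.length ≤ v.length generalizing u v
  · exact (this hv hu (by omega)).symm
  left
  calc u = factorAtN w n u.length := hu.symm
    _ <+: factorAtN w n (u.length + (v.length - u.length)) := by
      rw [factorAtN_add]
      exact List.prefix_append _ _
    _ = v := by rw [Nat.add_sub_cancel' huv, hv]

theorem OccursAt.prefix_or_prefix_drop (hu : OccursAt u w n) (hv : OccursAt v w (n + k)) :
    u.drop k <+: v ∨ v <+: u.drop k :=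
  (hu.drop k).prefix_or_prefix hv

theorem SquareFreeN.squareFreeL_of_occursAt (hw : SquareFreeN w) (hu : OccursAt u w n) :
    SquareFreeL u := by
  rintro x hx ⟨s, r, rfl⟩
  have hxx := (occursAt_append_iff.1 (occursAt_append_iff.1 hu).1).2
  exact hw x hx (isFactorN_iff_exists_occursAt.2 ⟨_, hxx⟩)

theorem exists_eq_add_of_concat {b : ℕ → List α} {p : ℕ → ℕ} (h0 : p 0 = 0)
    (hsucc : ∀ i, p (i + 1) = p i + (b i).length) (hne : ∀ i, b i ≠ []) (n : ℕ) :
    ∃ i k, k < (b i).length ∧ n = p i + k := by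
  induction n with
  | zero => exact ⟨0, 0, List.length_pos_of_ne_nil (hne 0), by rw [h0]⟩
  | succ n ih =>
    obtain ⟨i, k, hk, rfl⟩ := ih
    by_cases hk' : k + 1 < (b i).length
    · exact ⟨i, k + 1, hk', by omega⟩
    · exact ⟨i + 1, 0, List.length_pos_of_ne_nil (hne _), by rw [hsucc]; omega⟩

end Occurrence

def blockWords : List (List (Fin 3)) :=
  [[0,1,0,2], [0,1], [0,1,2], [0,1,2,1], [0,2], [0,2,1,2]]

/-- `p i` is the position in `t = 1213·b₁·b₂⋯` at which the block `b i` starts. -/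
structure IsBlockParse (t : ℕ → Fin 3) (b : ℕ → List (Fin 3)) (p : ℕ → ℕ) : Prop where
  first : b 0 = [0,1,0,2]
  tail : ∀ i, 1 ≤ i → b i ∈ [[0,1], [0,1,2], [0,1,2,1], [0,2], [0,2,1,2]]
  start : p 0 = 0
  succ : ∀ i, p (i + 1) = p i + (b i).length
  occursAt : ∀ i, OccursAt (b i) t (p i)

namespace IsBlockParse

variable {t : ℕ → Fin 3} {b : ℕ → List (Fin 3)} {p : ℕ → ℕ}

theorem mem_blockWords (h : IsBlockParse t b p) (i : ℕ) : b i ∈ blockWords := by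
  rcases i with _ | i
  · simp [h.first, blockWords]
  · exact List.mem_cons_of_mem _ (h.tail (i + 1) i.succ_pos)

theorem zero_prefix (h : IsBlockParse t b p) (i : ℕ) : [0] <+: b i := by
  have key : ∀ L ∈ blockWords, [0] <+: L := by decide
  exact key _ (h.mem_blockWords i)

theorem ne_nil (h : IsBlockParse t b p) (i : ℕ) : b i ≠ [] := by
  obtain ⟨r, hr⟩ := h.zero_prefix i
  simp [← hr]

theorem occursAt_append_zero (h : IsBlockParse t b p) (i : ℕ) :
    OccursAt (b i ++ [0]) t (p i) :=
  occursAt_append_iff.2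
    ⟨h.occursAt i, h.succ i ▸ (h.occursAt (i + 1)).of_prefix (h.zero_prefix (i + 1))⟩

theorem occursAt_append_append_zero (h : IsBlockParse t b p) (i : ℕ) :
    OccursAt (b i ++ b (i + 1) ++ [0]) t (p i) := by
  rw [List.append_assoc]
  exact occursAt_append_iff.2 ⟨h.occursAt i, h.succ i ▸ h.occursAt_append_zero (i + 1)⟩

theorem occursAt_first (h : IsBlockParse t b p) : OccursAt [0,1,0,2,0] t 0 := by
  simpa [h.first, h.start] using h.occursAt_append_zero 0

/-- The offset `k` may depend on the candidate block: `fun L => L.length - 1` reads `v` from its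
last letter on. -/
theorem mem_filter_of_occursAt (h : IsBlockParse t b p) (k : List (Fin 3) → ℕ) {v : List (Fin 3)}
    {i : ℕ} (hv : OccursAt v t (p i + k (b i))) :
    b i ∈ blockWords.filter fun L => (L ++ [0]).drop (k L) <+: v ∨ v <+: (L ++ [0]).drop (k L) :=
  List.mem_filter.2
    ⟨h.mem_blockWords i, decide_eq_true ((h.occursAt_append_zero i).prefix_or_prefix_drop hv)⟩

theorem eq_two_or_exists_eq_of_eq_zero (h : IsBlockParse t b p) {n : ℕ} (hn : t n = 0) :
    n = 2 ∨ ∃ i, p i = n := by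
  obtain ⟨i, k, hk, rfl⟩ := exists_eq_add_of_concat h.start h.succ h.ne_nil n
  have hbk : (b i)[k]? = some 0 := hn ▸ (h.occursAt i).getElem? hk
  have key : ∀ L ∈ blockWords, ∀ k < L.length, L[k]? = some 0 →
      k = 0 ∨ (L = [0,1,0,2] ∧ k = 2) := by
    decide
  obtain rfl | ⟨hfirst, rfl⟩ := key _ (h.mem_blockWords i) k hk hbk
  · exact Or.inr ⟨i, rfl⟩
  · obtain rfl : i = 0 := by
      by_contra hi
      exact absurd (hfirst ▸ h.tail i (Nat.one_le_iff_ne_zero.2 hi)) (by decide)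
    exact Or.inl (by rw [h.start])

theorem not_occursAt_132313 (h : IsBlockParse t b p) (hsf : SquareFreeN t) (m : ℕ) :
    ¬ OccursAt [0,2,1,2,0,2] t m := by
  intro hm
  rcases h.eq_two_or_exists_eq_of_eq_zero (occursAt_singleton.1 (hm.of_prefix (by decide)))
    with rfl | ⟨i, rfl⟩
  · exact absurd (h.occursAt_first.prefix_or_prefix_drop (k := 2) hm) (by decide)
  have hbi : b i = [0,2,1,2] := by
    simpa [blockWords] using h.mem_filter_of_occursAt (fun _ => 0) hm
  have hnext : OccursAt [0,2] t (p (i + 1)) := by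
    rw [h.succ, hbi]
    exact (occursAt_append_iff.1 (show OccursAt ([0,2,1,2] ++ [0,2]) t (p i) from hm)).2
  have hsq := hsf.squareFreeL_of_occursAt (h.occursAt_append_append_zero i)
  rw [hbi] at hsq
  have hbi' : b (i + 1) = [0,2] ∨ b (i + 1) = [0,2,1,2] := by
    simpa [blockWords] using h.mem_filter_of_occursAt (fun _ => 0) hnext
  rcases hbi' with hbi' | hbi'
  · exact hsq [2,0] (by simp) (by rw [hbi']; decide)
  · exact hsq [0,2,1,2] (by simp) (by rw [hbi']; decide)

theorem not_occursAt_21232 (h : IsBlockParse t b p) (hsf : SquareFreeN t) (m : ℕ) :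
    ¬ OccursAt [1,0,1,2,1] t m := by
  intro hm
  have hm1 : OccursAt [0,1,2,1] t (m + 1) :=
    (occursAt_append_iff.1 (show OccursAt ([1] ++ [0,1,2,1]) t m from hm)).2
  rcases h.eq_two_or_exists_eq_of_eq_zero (occursAt_singleton.1 (hm1.of_prefix (by decide)))
    with h2 | ⟨i, hi⟩
  · obtain rfl : m = 1 := by omega
    exact absurd (h.occursAt_first.prefix_or_prefix_drop (k := 1) hm) (by decide)
  rw [← hi] at hm1
  have hbi : b i = [0,1,2,1] := by
    simpa [blockWords] using h.mem_filter_of_occursAt (fun _ => 0) hm1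
  obtain ⟨j, rfl⟩ : ∃ j, i = j + 1 :=
    Nat.exists_eq_succ_of_ne_zero (by rintro rfl; simp [h.first] at hbi)
  have hm' : OccursAt [1,0,1,2,1] t (p j + ((b j).length - 1)) := by
    have hpos := List.length_pos_of_ne_nil (h.ne_nil j)
    have hsucc := h.succ j
    convert hm using 1
    omega
  have hsq := hsf.squareFreeL_of_occursAt (h.occursAt_append_append_zero j)
  rw [hbi] at hsq
  have hbj : b j = [0,1] ∨ b j = [0,1,2,1] := by
    simpa [blockWords] using h.mem_filter_of_occursAt (fun L => L.length - 1) hm'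
  rcases hbj with hbj | hbj
  · exact hsq [0,1] (by simp) (by rw [hbj]; decide)
  · exact hsq [0,1,2,1] (by simp) (by rw [hbj]; decide)

end IsBlockParse

/-- For a good ω-word `t` of the form `1213·b₁·b₂⋯` with each
`bᵢ ∈ {12,123,1232,13,1323}`, neither `132313` nor `21232` is a factor of `t`. -/
theorem stmt_10 (b : ℕ → List (Fin 3)) (hb0 : b 0 = [0,1,0,2])
    (hb : ∀ i, 1 ≤ i → b i ∈ [[0,1], [0,1,2], [0,1,2,1], [0,2], [0,2,1,2]])
    (t : ℕ → Fin 3) (ht : NConcat t b) (hg : GoodN t) :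
    ¬ IsFactorN [0,2,1,2,0,2] t ∧ ¬ IsFactorN [1,0,1,2,1] t := by
  obtain ⟨p, hp0, hps, hpf⟩ := ht
  have h : IsBlockParse t b p := ⟨hb0, hb, hp0, hps, fun i => (hpf i).symm⟩
  simp only [isFactorN_iff_exists_occursAt, not_exists]
  exact ⟨h.not_occursAt_132313 hg.1, h.not_occursAt_21232 hg.1⟩
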